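/- arXiv:1608.07255 — 7 statements merged into one kernel-verified Lean document; each statement's English description precedes it below -/
import Mathlib

section
/- Let G be an acyclic directed graph, ≺ a linear order on E(G) satisfying condition (U3), and v1, v2 two vertices of G. If Ī(v1) ∩ Ī(v2) ≠ ∅, then either Ī(v1) ⊆ Ī(v2) or Ī(v2) ⊆ Ī(v1). -/
variable {V E : Type}

/-- Edge reachability `e1 → e2`: a directed path of edges `f_0, …, f_k` with `k ≥ 1`,
`f_0 = e1`, `f_k = e2` and `t f_{i-1} = s f_i`. -/
def eReach (s t : E → V) : E → E → Prop :=
  Relation.TransGen (fun a b => t a = s b)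

/-- Vertex reachability `v → w`: a directed path from `v` to `w` using at least one edge. -/
def vReach (s t : E → V) : V → V → Prop :=
  Relation.TransGen (fun v w => ∃ e, s e = v ∧ t e = w)

/-- A directed graph is acyclic if no vertex reaches itself. -/
def Acyclic (s t : E → V) : Prop := ∀ v, ¬ vReach s t v v

/-- `I(v)`: incoming edges of `v`. -/
def inE (t : E → V) (v : V) : Set E := {e | t e = v}

/-- `O(v)`: outgoing edges of `v`. -/
def outE (s : E → V) (v : V) : Set E := {e | s e = v}

/-- Convex hull `X̄` of `X` in the linear order `le`: the interval `{y | X^- ≤ y ≤ X^+}`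
(empty when `X` is empty). -/
def hull (le : E → E → Prop) (X : Set E) : Set E :=
  {y | ∃ a ∈ X, ∃ b ∈ X, le a y ∧ le y b}

/-- The strict order associated to a linear order `le`. -/
def ltOf (le : E → E → Prop) (a b : E) : Prop := le a b ∧ a ≠ b

/-- A source: no incoming edges. -/
def IsSource (t : E → V) (v : V) : Prop := inE t v = ∅

/-- A sink: no outgoing edges. -/
def IsSink (s : E → V) (v : V) : Prop := outE s v = ∅

/-- A progressive graph: acyclic and every source and every sink has degree 1. -/
def Progressive (s t : E → V) : Prop :=
  Acyclic s t ∧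
  ∀ v, (IsSource t v ∨ IsSink s v) → ({e | s e = v ∨ t e = v} : Set E).ncard = 1

/-- `I(G)`: input edges, those whose source vertex is a source of `G`. -/
def inputE (s t : E → V) : Set E := {e | IsSource t (s e)}

/-- `O(G)`: output edges, those whose target vertex is a sink of `G`. -/
def outputE (s t : E → V) : Set E := {e | IsSink s (t e)}

/-- Condition (U1) = (P1): `e1 → e2` implies `e1 ≺ e2`. -/
def U1 (s t : E → V) (le : E → E → Prop) : Prop :=
  ∀ e1 e2, eReach s t e1 e2 → ltOf le e1 e2

/-- Condition (U2): for every vertex `v`, `Ī(v) ∩ Ō(v) = ∅` and `Ē(v) = Ī(v) ∪ Ō(v)`. -/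
def U2 (s t : E → V) (le : E → E → Prop) : Prop :=
  ∀ v, hull le (inE t v) ∩ hull le (outE s v) = ∅ ∧
    hull le (inE t v ∪ outE s v) = hull le (inE t v) ∪ hull le (outE s v)

/-- Condition (U3). -/
def U3 (s t : E → V) (le : E → E → Prop) : Prop :=
  ∀ v1 v2,
    ((inE t v1 ∩ hull le (inE t v2)).Nonempty →
      hull le (inE t v1) ⊆ hull le (inE t v2)) ∧
    ((outE s v1 ∩ hull le (outE s v2)).Nonempty →
      hull le (outE s v1) ⊆ hull le (outE s v2))

/-- Condition (U4): for every progressive vertex `v`, `I(G) ∩ Ō(v) = ∅` and `O(G) ∩ Ī(v) = ∅`. -/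
def U4 (s t : E → V) (le : E → E → Prop) : Prop :=
  ∀ v, ¬ IsSource t v → ¬ IsSink s v →
    inputE s t ∩ hull le (outE s v) = ∅ ∧ outputE s t ∩ hull le (inE t v) = ∅

/-- An upward planar order: a linear order on the edges satisfying (U1), (U2), (U3). -/
def IsUPO (s t : E → V) (le : E → E → Prop) : Prop :=
  IsLinearOrder E le ∧ U1 s t le ∧ U2 s t le ∧ U3 s t le

/-- Condition (P2). -/
def P2 (s t : E → V) (le : E → E → Prop) : Prop :=
  ∀ e1 e2 e3, ltOf le e1 e2 → ltOf le e2 e3 → eReach s t e1 e3 →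
    eReach s t e1 e2 ∨ eReach s t e2 e3

/-- Condition (P̃2). -/
def P2t (s t : E → V) (le : E → E → Prop) : Prop :=
  ∀ e1 e2 e3, ltOf le e1 e2 → ltOf le e2 e3 → t e1 = s e3 →
    eReach s t e1 e2 ∨ eReach s t e2 e3

/-- Condition (P3) (for distinct vertices). -/
def P3 (s t : E → V) (le : E → E → Prop) : Prop :=
  ∀ v1 v2, v1 ≠ v2 →
    ((inE t v1 ∩ hull le (inE t v2)).Nonempty → vReach s t v1 v2) ∧
    ((outE s v1 ∩ hull le (outE s v2)).Nonempty → vReach s t v2 v1)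

/-- Condition (A): for distinct `v1 v2`, `∅ ≠ Ī(v1) ⊆ Ī(v2)` implies `v1 → v2`,
and `∅ ≠ Ō(v1) ⊆ Ō(v2)` implies `v2 → v1`. -/
def CondA (s t : E → V) (le : E → E → Prop) : Prop :=
  ∀ v1 v2, v1 ≠ v2 →
    ((hull le (inE t v1)).Nonempty → hull le (inE t v1) ⊆ hull le (inE t v2) →
      vReach s t v1 v2) ∧
    ((hull le (outE s v1)).Nonempty → hull le (outE s v1) ⊆ hull le (outE s v2) →
      vReach s t v2 v1)

/-- A POP-graph: a progressive graph with a planar order ((P1) and (P2)). -/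
def IsPOP (s t : E → V) (le : E → E → Prop) : Prop :=
  Progressive s t ∧ IsLinearOrder E le ∧ U1 s t le ∧ P2 s t le

/-- `U(v) = {w | Ō(v) ⊊ Ō(w)}` when `O(v) ≠ ∅`, and `U(v) = ∅` otherwise. -/
def Uset (s : E → V) (le : E → E → Prop) (v : V) : Set V :=
  {w | (outE s v).Nonempty ∧ hull le (outE s v) ⊂ hull le (outE s w)}

/-- `D(v) = {w | Ī(v) ⊊ Ī(w)}` when `I(v) ≠ ∅`, and `D(v) = ∅` otherwise. -/
def Dset (t : E → V) (le : E → E → Prop) (v : V) : Set V :=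
  {w | (inE t v).Nonempty ∧ hull le (inE t v) ⊂ hull le (inE t w)}

/-- A CPP-extension of `G = (s, t)`: a POP-graph `(s', t', le')` with an embedding
`(φ0, φ1)` satisfying (E1)–(E4). -/
def IsCPP {V' E' : Type} (s t : E → V) (s' t' : E' → V')
    (le' : E' → E' → Prop) (φ0 : V → V') (φ1 : E → E') : Prop :=
  Function.Injective φ0 ∧ Function.Injective φ1 ∧
  (∀ e, s' (φ1 e) = φ0 (s e)) ∧ (∀ e, t' (φ1 e) = φ0 (t e)) ∧
  IsPOP s' t' le' ∧
  -- (E1)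
  Set.range φ0 = {v : V' | ¬ IsSource t' v ∧ ¬ IsSink s' v} ∧
  -- (E2)
  Nat.card E' = Nat.card E + ({v : V | IsSource t v}).ncard + ({v : V | IsSink s v}).ncard ∧
  -- (E3)
  (∀ v w, IsSource t v → IsSink s w → inE t' (φ0 v) ∩ outE s' (φ0 w) = ∅) ∧
  -- (E4)
  (∀ e' : E', e' ∉ Set.range φ1 → e' ∉ inputE s' t' → e' ∉ outputE s' t' →
    ((∃ a ∈ outE s' (s' e'), ltOf le' a e') ∧ (∃ b ∈ outE s' (s' e'), ltOf le' e' b)) ∨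
    ((∃ a ∈ inE t' (t' e'), ltOf le' a e') ∧ (∃ b ∈ inE t' (t' e'), ltOf le' e' b)))

section Hull

variable {le : E → E → Prop} {X Y : Set E}

theorem mem_hull_of_le_of_le [IsTrans E le] {a b x y : E} (ha : a ∈ X) (hb : b ∈ X)
    (hay : le a y) (hyx : le y x) (hxb : le x b) : y ∈ hull le X :=
  ⟨a, ha, b, hb, hay, _root_.trans hyx hxb⟩

/-- Of two overlapping intervals, the one with the larger left endpoint has that endpoint in
the other. -/
theorem inter_hull_nonempty_or_of_hull_inter_nonempty [IsTrans E le] [Std.Total le]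
    (h : (hull le X ∩ hull le Y).Nonempty) :
    (X ∩ hull le Y).Nonempty ∨ (Y ∩ hull le X).Nonempty := by
  obtain ⟨x, ⟨a, ha, b, hb, hax, hxb⟩, ⟨a', ha', b', hb', hax', hxb'⟩⟩ := h
  rcases Std.Total.total (r := le) a a' with haa' | ha'a
  · exact .inr ⟨a', ha', mem_hull_of_le_of_le ha hb haa' hax' hxb⟩
  · exact .inl ⟨a, ha, mem_hull_of_le_of_le ha' hb' ha'a hax hxb'⟩

end Hull

theorem inHulls_nested_general {V E : Type}
    (s t : E → V) (le : E → E → Prop) (hlin : IsLinearOrder E le)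
    (h3 : U3 s t le) (v1 v2 : V)
    (h : (hull le (inE t v1) ∩ hull le (inE t v2)).Nonempty) :
    hull le (inE t v1) ⊆ hull le (inE t v2) ∨
      hull le (inE t v2) ⊆ hull le (inE t v1) := by
  have := hlin
  exact (inter_hull_nonempty_or_of_hull_inter_nonempty h).imp (h3 v1 v2).1 (h3 v2 v1).1

/-- under (U3), overlapping in-hulls are nested. -/
theorem inHulls_nested {V E : Type} [Fintype V] [Fintype E]
    (s t : E → V) (le : E → E → Prop) (hlin : IsLinearOrder E le)
    (hac : Acyclic s t) (h3 : U3 s t le) (v1 v2 : V)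
    (h : (hull le (inE t v1) ∩ hull le (inE t v2)).Nonempty) :
    hull le (inE t v1) ⊆ hull le (inE t v2) ∨
      hull le (inE t v2) ⊆ hull le (inE t v1) :=
  inHulls_nested_general s t le hlin h3 v1 v2 h
end

section
/- Let G be an acyclic directed graph with a linear order ≺ on E(G), let H be a subgraph of G, and let ≺_H be the linear order on E(H) induced by restricting ≺. If ≺ satisfies condition (U3) on G, then ≺_H satisfies condition (U3) on H (with convex hulls computed inside (E(H), ≺_H)). -/
variable {V E : Type}

/-- Every nonempty finset has a `le`-least element when `le` is total and transitive. -/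
lemma exists_min_finset {E : Type} (le : E → E → Prop)
    (htot : ∀ a b, le a b ∨ le b a) (htrans : ∀ {a b c}, le a b → le b c → le a c) :
    ∀ s : Finset E, s.Nonempty → ∃ m ∈ s, ∀ x ∈ s, le m x := by
  classical
  intro s
  induction s using Finset.induction_on with
  | empty => intro h; simp at h
  | @insert a s' ha ih =>
    intro _
    by_cases hs' : s'.Nonempty
    · obtain ⟨m, hm, hmin⟩ := ih hs'
      rcases htot a m with h | h
      · refine ⟨a, Finset.mem_insert_self _ _, ?_⟩
        intro x hx
        rcases Finset.mem_insert.mp hx with rfl | hx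
        · rcases htot x x with h' | h' <;> exact h'
        · exact htrans h (hmin x hx)
      · refine ⟨m, Finset.mem_insert_of_mem hm, ?_⟩
        intro x hx
        rcases Finset.mem_insert.mp hx with rfl | hx
        · exact h
        · exact hmin x hx
    · refine ⟨a, Finset.mem_insert_self _ _, ?_⟩
      intro x hx
      rcases Finset.mem_insert.mp hx with rfl | hx
      · rcases htot x x with h' | h' <;> exact h'
      · exact absurd ⟨x, hx⟩ hs'

/-- If two nonempty sets have mutually contained hulls, they intersect. -/
lemma hulls_subset_inter {E : Type} [Fintype E] (le : E → E → Prop)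
    (hlin : IsLinearOrder E le) (S T : Set E) (hS : S.Nonempty) (hT : T.Nonempty)
    (h1 : hull le S ⊆ hull le T) (h2 : hull le T ⊆ hull le S) :
    (S ∩ T).Nonempty := by
  classical
  have htot : ∀ a b, le a b ∨ le b a := fun a b => hlin.total a b
  have htrans : ∀ {a b c}, le a b → le b c → le a c :=
    fun h h' => hlin.trans _ _ _ h h'
  have hanti : ∀ {a b}, le a b → le b a → a = b := fun h h' => hlin.antisymm _ _ h h'
  have hrefl : ∀ a, le a a := fun a => (htot a a).elim id id
  have hUne : ((S ∪ T).toFinset).Nonempty := by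
    obtain ⟨x, hx⟩ := hS
    exact ⟨x, by simp [hx]⟩
  obtain ⟨m, hm, hmin⟩ := exists_min_finset le htot htrans _ hUne
  rw [Set.mem_toFinset] at hm
  have hminS : ∀ x ∈ S ∪ T, le m x := fun x hx => hmin x (Set.mem_toFinset.mpr hx)
  rcases hm with hm | hm
  · -- m ∈ S: m ∈ hull S ⊆ hull T gives p ∈ T with le p m, minimality gives p = m
    have : m ∈ hull le T := h1 ⟨m, hm, m, hm, hrefl m, hrefl m⟩
    obtain ⟨p, hp, _, _, hpm, _⟩ := this
    have : p = m := hanti hpm (hminS p (Or.inr hp))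
    exact ⟨m, hm, this ▸ hp⟩
  · have : m ∈ hull le S := h2 ⟨m, hm, m, hm, hrefl m, hrefl m⟩
    obtain ⟨p, hp, _, _, hpm, _⟩ := this
    have : p = m := hanti hpm (hminS p (Or.inl hp))
    exact ⟨m, this ▸ hp, hm⟩

/-- Key half of (U3) heredity, for an arbitrary endpoint map `f` (either `s` or `t`). -/
lemma U3_half {V E VH EH : Type} [Fintype E] (f : E → V) (fH : EH → VH)
    (φ0 : VH → V) (φ1 : EH → E) (h0 : Function.Injective φ0)
    (hc : ∀ e, f (φ1 e) = φ0 (fH e))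
    (le : E → E → Prop) (hlin : IsLinearOrder E le)
    (hU : ∀ w1 w2 : V, (({e | f e = w1} : Set E) ∩ hull le {e | f e = w2}).Nonempty →
      hull le ({e | f e = w1} : Set E) ⊆ hull le {e | f e = w2})
    (v1 v2 : VH) :
    (({e | fH e = v1} : Set EH) ∩
        hull (fun a b => le (φ1 a) (φ1 b)) {e | fH e = v2}).Nonempty →
      hull (fun a b => le (φ1 a) (φ1 b)) ({e | fH e = v1} : Set EH) ⊆
        hull (fun a b => le (φ1 a) (φ1 b)) {e | fH e = v2} := by
  classical
  have htot : ∀ a b, le a b ∨ le b a := fun a b => hlin.total a b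
  have htrans : ∀ {a b c}, le a b → le b c → le a c :=
    fun h h' => hlin.trans _ _ _ h h'
  rintro ⟨e0, he0, a2, ha2, b2, hb2, h1, h2⟩ y ⟨a, ha, b, hb, hya, hyb⟩
  by_cases hv : v1 = v2
  · subst hv
    exact ⟨a, ha, b, hb, hya, hyb⟩
  have hw : φ0 v1 ≠ φ0 v2 := fun h => hv (h0 h)
  -- membership facts in G
  have hfe0 : f (φ1 e0) = φ0 v1 := by rw [hc]; exact congrArg φ0 he0
  have hfa : f (φ1 a) = φ0 v1 := by rw [hc]; exact congrArg φ0 ha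
  have hfb : f (φ1 b) = φ0 v1 := by rw [hc]; exact congrArg φ0 hb
  have hfa2 : f (φ1 a2) = φ0 v2 := by rw [hc]; exact congrArg φ0 ha2
  have hfb2 : f (φ1 b2) = φ0 v2 := by rw [hc]; exact congrArg φ0 hb2
  have H1 : hull le ({e | f e = φ0 v1} : Set E) ⊆ hull le {e | f e = φ0 v2} :=
    hU _ _ ⟨φ1 e0, hfe0, φ1 a2, hfa2, φ1 b2, hfb2, h1, h2⟩
  -- If a2 ≤ y ≤ b2 in the induced order we are done; otherwise derive contradiction.
  rcases htot (φ1 a2) (φ1 y) with hh1 | hh1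
  · rcases htot (φ1 y) (φ1 b2) with hh2 | hh2
    · exact ⟨a2, ha2, b2, hb2, hh1, hh2⟩
    · -- b2 ≤ y ≤ b, with e0 ≤ b2, so b2 ∈ hull(I w1)
      have H2 : hull le ({e | f e = φ0 v2} : Set E) ⊆ hull le {e | f e = φ0 v1} :=
        hU _ _ ⟨φ1 b2, hfb2, φ1 e0, hfe0, φ1 b, hfb, h2, htrans hh2 hyb⟩
      obtain ⟨p, hp1, hp2⟩ := hulls_subset_inter le hlin _ _ ⟨φ1 e0, hfe0⟩
        ⟨φ1 a2, hfa2⟩ H1 H2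
      exact absurd (hp1.symm.trans hp2) hw
  · -- a ≤ y ≤ a2 ≤ e0, so a2 ∈ hull(I w1)
    have H2 : hull le ({e | f e = φ0 v2} : Set E) ⊆ hull le {e | f e = φ0 v1} :=
      hU _ _ ⟨φ1 a2, hfa2, φ1 a, hfa, φ1 e0, hfe0, htrans hya hh1, h1⟩
    obtain ⟨p, hp1, hp2⟩ := hulls_subset_inter le hlin _ _ ⟨φ1 e0, hfe0⟩
      ⟨φ1 a2, hfa2⟩ H1 H2
    exact absurd (hp1.symm.trans hp2) hw

/-- (U3) is inherited by subgraphs (hulls computed inside `(E(H), ≺_H)`). -/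
theorem U3_hereditary {V E VH EH : Type} [Fintype V] [Fintype E] [Fintype VH] [Fintype EH]
    (s t : E → V) (sH tH : EH → VH) (φ0 : VH → V) (φ1 : EH → E)
    (h0 : Function.Injective φ0) (h1 : Function.Injective φ1)
    (hs : ∀ e, s (φ1 e) = φ0 (sH e)) (ht : ∀ e, t (φ1 e) = φ0 (tH e))
    (le : E → E → Prop) (hlin : IsLinearOrder E le)
    (hac : Acyclic s t) (hU3 : U3 s t le) :
    U3 sH tH (fun a b => le (φ1 a) (φ1 b)) := by
  intro v1 v2
  constructor
  · exact U3_half t tH φ0 φ1 h0 ht le hlin (fun w1 w2 => (hU3 w1 w2).1) v1 v2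
  · exact U3_half s sH φ0 φ1 h0 hs le hlin (fun w1 w2 => (hU3 w1 w2).2) v1 v2
end

section
/- Let G be a progressive graph and ≺ a linear order on E(G) satisfying condition (P1). Then ≺ satisfies condition (P2) if and only if ≺ satisfies condition (P̃2). -/
variable {V E : Type}

/-- for a progressive graph with (P1), (P2) ↔ (P̃2). -/
theorem P2_iff_P2t {V E : Type} [Fintype V] [Fintype E]
    (s t : E → V) (le : E → E → Prop) (hlin : IsLinearOrder E le)
    (hprog : Progressive s t) (hP1 : U1 s t le) :
    P2 s t le ↔ P2t s t le := by
  constructor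
  · intro h e1 e2 e3 h12 h23 hts
    exact h e1 e2 e3 h12 h23 (Relation.TransGen.single hts)
  · intro h e1 e2 e3 h12 h23 hr
    revert h23
    induction hr with
    | single hts => exact fun h23 => h _ _ _ h12 h23 hts
    | @tail b c hb step ih =>
      intro h2c
      rcases eq_or_ne e2 b with rfl | hne
      · exact Or.inl hb
      · rcases hlin.total e2 b with hle | hle
        · rcases ih ⟨hle, hne⟩ with h1 | h2
          · exact Or.inl h1
          · exact Or.inr (h2.tail step)
        · rcases h b e2 c ⟨hle, Ne.symm hne⟩ h2c step with hb2 | h2c'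
          · exact Or.inl (hb.trans hb2)
          · exact Or.inr h2c'
end

section
/- Every POP-graph satisfies condition (A); that is, if (G, ≺) is a progressive graph with a planar order ≺, then for all distinct vertices v1, v2 of G: ∅ ≠ Ī(v1) ⊆ Ī(v2) implies v1 → v2, and ∅ ≠ Ō(v1) ⊆ Ō(v2) implies v2 → v1. -/
variable {V E : Type}

/-!
Take `e ∈ I(v₁)` and in-edges `a ≼ e ≼ b` of `v₂`. Having two in-edges, `v₂` is not a sink, and for
an out-edge `c` of `v₂` we get `a ≺ e ≺ c` with `a → c`, so by (P2) either `a → e`, i.e. `v₂ → v₁`,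
or `e → c`, i.e. `v₁ → v₂`. The first is impossible: the last edge of a path `v₂ → v₁` follows every
in-edge of `v₂`, yet lies in `Ī(v₂)`. The out-edge half is the in-edge half of the reversed graph
with the reversed order.
-/

open Function Relation

section Reversal

variable {s t : E → V} {le : E → E → Prop}

theorem eReach_swap {e f : E} : eReach t s e f ↔ eReach s t f e := by
  rw [eReach, eReach, ← transGen_swap]
  simp only [eq_comm]

theorem vReach_swap {v w : V} : vReach t s v w ↔ vReach s t w v := by
  rw [vReach, vReach, ← transGen_swap]
  simp only [and_comm]

theorem hull_swap (X : Set E) : hull (swap le) X = hull le X := by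
  ext y
  simp only [hull, swap]
  exact ⟨fun ⟨a, ha, b, hb, hya, hby⟩ => ⟨b, hb, a, ha, hby, hya⟩,
    fun ⟨a, ha, b, hb, hay, hyb⟩ => ⟨b, hb, a, ha, hyb, hay⟩⟩

theorem ltOf_swap {a b : E} : ltOf (swap le) a b ↔ ltOf le b a := by
  simp only [ltOf, swap, ne_comm]

theorem Progressive.swap (hG : Progressive s t) : Progressive t s := by
  refine ⟨fun v h => hG.1 v (vReach_swap.1 h), fun v hv => ?_⟩
  simpa only [or_comm] using hG.2 v hv.symm

theorem IsPOP.swap (hG : IsPOP s t le) : IsPOP t s (Function.swap le) := by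
  obtain ⟨hProg, hLin, hU1, hP2⟩ := hG
  refine ⟨hProg.swap, inferInstance, fun e₁ e₂ h => ltOf_swap.2 (hU1 _ _ (eReach_swap.1 h)),
    fun e₁ e₂ e₃ h₁₂ h₂₃ h₁₃ => ?_⟩
  simp only [eReach_swap, ltOf_swap] at *
  exact (hP2 e₃ e₂ e₁ h₂₃ h₁₂ h₁₃).symm

end Reversal

section Paths

variable {s t : E → V}

theorem eReach.vReach_target {a b : E} (h : eReach s t a b) : vReach s t (t a) (t b) := by
  induction h with
  | single h => exact .single ⟨_, h.symm, rfl⟩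
  | tail _ h ih => exact ih.tail ⟨_, h.symm, rfl⟩

theorem eReach.reflTransGen_target_source {a b : E} (h : eReach s t a b) :
    ReflTransGen (fun v w => ∃ e, s e = v ∧ t e = w) (t a) (s b) := by
  induction h with
  | single h => exact h ▸ .refl
  | tail _ h ih => exact ih.tail ⟨_, rfl, h⟩

theorem vReach.exists_inE_eReach {v w : V} (h : vReach s t v w) :
    ∃ f ∈ inE t w, ∀ e ∈ inE t v, eReach s t e f := by
  induction h with
  | single h =>
    obtain ⟨f, hf, rfl⟩ := h
    exact ⟨f, rfl, fun e he => .single (he.trans hf.symm)⟩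
  | tail _ h ih =>
    obtain ⟨f, hf, hreach⟩ := ih
    obtain ⟨g, hg, rfl⟩ := h
    exact ⟨g, rfl, fun e he => (hreach e he).tail (hf.trans hg.symm)⟩

end Paths

theorem subset_hull {le : E → E → Prop} [Std.Refl le] (X : Set E) : X ⊆ hull le X :=
  fun x hx => ⟨x, hx, x, hx, refl_of le x, refl_of le x⟩

theorem not_vReach_of_inE_subset_hull {s t : E → V} {le : E → E → Prop} [Std.Antisymm le]
    (hU1 : U1 s t le) {v w : V} (hsub : inE t w ⊆ hull le (inE t v)) : ¬ vReach s t v w := by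
  intro hvw
  obtain ⟨f, hf, hreach⟩ := hvw.exists_inE_eReach
  obtain ⟨-, -, b, hb, -, hfb⟩ := hsub hf
  obtain ⟨hbf, hne⟩ := hU1 b f (hreach b hb)
  exact hne (antisymm_of le hbf hfb)

theorem Progressive.outE_nonempty {s t : E → V} (hG : Progressive s t) {v : V} {a b : E}
    (ha : t a = v) (hb : t b = v) (hab : a ≠ b) : (outE s v).Nonempty := by
  by_contra hsink
  obtain ⟨x, hx⟩ := Set.ncard_eq_one.1 (hG.2 v (Or.inr (Set.not_nonempty_iff_eq_empty.1 hsink)))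
  have hmem : ∀ e, t e = v → e = x := fun e he => by
    have : e ∈ {e | s e = v ∨ t e = v} := Or.inr he
    rwa [hx, Set.mem_singleton_iff] at this
  exact hab ((hmem a ha).trans (hmem b hb).symm)

theorem IsPOP.vReach_of_hull_inE_subset {s t : E → V} {le : E → E → Prop} (hG : IsPOP s t le)
    {v₁ v₂ : V} (hne : v₁ ≠ v₂) (hnon : (hull le (inE t v₁)).Nonempty)
    (hsub : hull le (inE t v₁) ⊆ hull le (inE t v₂)) : vReach s t v₁ v₂ := by
  obtain ⟨hProg, hLin, hU1, hP2⟩ := hG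
  obtain ⟨-, e, (he : t e = v₁), -⟩ := hnon
  obtain ⟨a, (ha : t a = v₂), b, (hb : t b = v₂), hae, heb⟩ := hsub (subset_hull _ he)
  have hae' : a ≠ e := by rintro rfl; exact hne (he.symm.trans ha)
  have hab : a ≠ b := by rintro rfl; exact hae' (antisymm_of le hae heb)
  obtain ⟨c, (hc : s c = v₂)⟩ := hProg.outE_nonempty ha hb hab
  have hbc := hU1 b c (.single (hb.trans hc.symm))
  have hec : ltOf le e c := ⟨_root_.trans_of le heb hbc.1, by
    rintro rfl; exact hbc.2 (antisymm_of le hbc.1 heb)⟩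
  rcases hP2 a e c ⟨hae, hae'⟩ hec (.single (ha.trans hc.symm)) with hreach | hreach
  · have hv₂₁ : vReach s t v₂ v₁ := ha ▸ he ▸ hreach.vReach_target
    exact absurd hv₂₁ (not_vReach_of_inE_subset_hull hU1 ((subset_hull _).trans hsub))
  · have := hreach.reflTransGen_target_source
    rw [he, hc, reflTransGen_iff_eq_or_transGen] at this
    exact this.resolve_left hne.symm

theorem pop_satisfies_A_general {V E : Type}
    (s t : E → V) (le : E → E → Prop) (hPOP : IsPOP s t le) :
    CondA s t le := by
  intro v₁ v₂ hne
  refine ⟨hPOP.vReach_of_hull_inE_subset hne, fun hnon hsub => ?_⟩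
  exact vReach_swap.1 <| hPOP.swap.vReach_of_hull_inE_subset hne
    (by simp only [hull_swap]; exact hnon) (by simp only [hull_swap]; exact hsub)

/-- every POP-graph satisfies condition (A). -/
theorem pop_satisfies_A {V E : Type} [Fintype V] [Fintype E]
    (s t : E → V) (le : E → E → Prop) (hPOP : IsPOP s t le) :
    CondA s t le :=
  pop_satisfies_A_general s t le hPOP
end

section
/- Every planar order on a progressive graph satisfies condition (U2); that is, if (G, ≺) is a POP-graph, then for every progressive vertex v of G, the edge O(v)^- is the immediate successor of I(v)^+ in (E(G), ≺), and hence Ī(v) ∩ Ō(v) = ∅ and Ē(v) = Ī(v) ∪ Ō(v) for every vertex v. -/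
variable {V E : Type}

/-! An in-edge `i` and an out-edge `o` of `v` satisfy `i → o`, so (P1) places `I(v)` entirely below
`O(v)`. If an edge `f` lay strictly between `a = I(v)⁺` and `b = O(v)⁻`, then (P2) applied to `a → b`
would give a path `a → f` or `f → b`. The first path starts with an out-edge of `v`, which is `≽ b`,
and the second ends with an in-edge of `v`, which is `≼ a`; by (P1) both contradict the position of
`f`. Given this gap between `a` and `b`, both identities of (U2) are statements about intervals of a
linear order. -/

section Order

variable {E : Type} {le : E → E → Prop} {X Y : Set E} {a b : E}

theorem ltOf_of_not_le [Std.Refl le] [Std.Total le] (h : ¬ le b a) : ltOf le a b :=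
  ⟨(total_of le b a).resolve_left h, fun hab => h (hab ▸ refl_of le a)⟩

theorem not_le_of_ltOf [Std.Antisymm le] (h : ltOf le a b) : ¬ le b a :=
  fun hba => h.2 (antisymm h.1 hba)

theorem exists_forall_le_of_finite [Finite E] [IsLinearOrder E le] (hX : X.Nonempty) :
    ∃ b ∈ X, ∀ x ∈ X, le b x := by
  have : IsTrans E (ltOf le) :=
    ⟨fun x y z hxy hyz => ⟨trans_of le hxy.1 hyz.1,
      fun hxz => hyz.2 (antisymm hyz.1 (hxz ▸ hxy.1))⟩⟩
  have : Std.Irrefl (ltOf le) := ⟨fun x hx => hx.2 rfl⟩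
  obtain ⟨b, hb, hmin⟩ := (Finite.wellFounded_of_trans_of_irrefl (ltOf le)).has_min X hX
  exact ⟨b, hb, fun x hx => by_contra fun hbx => hmin x hx (ltOf_of_not_le hbx)⟩

theorem exists_forall_ge_of_finite [Finite E] [IsLinearOrder E le] (hX : X.Nonempty) :
    ∃ a ∈ X, ∀ x ∈ X, le x a :=
  exists_forall_le_of_finite (le := Function.swap le) hX

theorem hull_mono (h : X ⊆ Y) : hull le X ⊆ hull le Y :=
  fun _ ⟨p, hp, q, hq, hpy, hyq⟩ => ⟨p, h hp, q, h hq, hpy, hyq⟩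

theorem hull_empty : hull le ∅ = ∅ :=
  Set.eq_empty_of_forall_notMem fun _ ⟨_, hp, _⟩ => hp

theorem le_of_mem_hull [IsTrans E le] (hamax : ∀ x ∈ X, le x a) {y : E} (hy : y ∈ hull le X) :
    le y a :=
  let ⟨_, _, _, hq, _, hyq⟩ := hy
  trans_of le hyq (hamax _ hq)

theorem ge_of_mem_hull [IsTrans E le] (hbmin : ∀ x ∈ X, le b x) {y : E} (hy : y ∈ hull le X) :
    le b y :=
  let ⟨_, hp, _, _, hpy, _⟩ := hy
  trans_of le (hbmin _ hp) hpy

theorem hull_inter_hull_eq_empty [IsTrans E le] [Std.Antisymm le]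
    (hamax : ∀ x ∈ X, le x a) (hbmin : ∀ y ∈ Y, le b y) (hab : ltOf le a b) :
    hull le X ∩ hull le Y = ∅ :=
  Set.eq_empty_of_forall_notMem fun _ ⟨hyX, hyY⟩ =>
    not_le_of_ltOf hab (trans_of le (ge_of_mem_hull hbmin hyY) (le_of_mem_hull hamax hyX))

theorem hull_union_eq_union_hull [IsLinearOrder E le]
    (ha : a ∈ X) (hamax : ∀ x ∈ X, le x a) (hb : b ∈ Y) (hbmin : ∀ y ∈ Y, le b y)
    (hab : ltOf le a b) (hgap : ∀ f, ltOf le a f → ltOf le f b → False) :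
    hull le (X ∪ Y) = hull le X ∪ hull le Y := by
  refine subset_antisymm ?_ (Set.union_subset (hull_mono Set.subset_union_left)
    (hull_mono Set.subset_union_right))
  rintro y ⟨p, hpX | hpY, q, hqX | hqY, hpy, hyq⟩
  · exact Or.inl ⟨p, hpX, q, hqX, hpy, hyq⟩
  · by_cases hya : le y a
    · exact Or.inl ⟨p, hpX, a, ha, hpy, hya⟩
    by_cases hby : le b y
    · exact Or.inr ⟨b, hb, q, hqY, hby, hyq⟩
    exact (hgap y (ltOf_of_not_le hya) (ltOf_of_not_le hby)).elim
  · have hba : le b a :=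
      trans_of le (hbmin p hpY) (trans_of le (trans_of le hpy hyq) (hamax q hqX))
    exact (not_le_of_ltOf hab hba).elim
  · exact Or.inr ⟨p, hpY, q, hqY, hpy, hyq⟩

end Order

section Planar

variable {V E : Type} {s t : E → V} {le : E → E → Prop} {v : V} {a b f : E}

theorem U1.ltOf_of_mem_inE_of_mem_outE (hU1 : U1 s t le) {i o : E} (hi : i ∈ inE t v)
    (ho : o ∈ outE s v) : ltOf le i o :=
  hU1 i o (.single (hi.trans ho.symm))

theorem U1.le_of_reflTransGen [Std.Refl le] (hU1 : U1 s t le) {x y : E}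
    (h : Relation.ReflTransGen (fun a b => t a = s b) x y) : le x y := by
  rcases Relation.reflTransGen_iff_eq_or_transGen.1 h with rfl | h
  · exact refl_of le _
  · exact (hU1 x y h).1

theorem U1.exists_mem_outE_le_of_eReach [Std.Refl le] (hU1 : U1 s t le) (h : eReach s t a f) :
    ∃ g ∈ outE s (t a), le g f :=
  let ⟨g, hag, hgf⟩ := Relation.TransGen.head'_iff.1 h
  ⟨g, hag.symm, hU1.le_of_reflTransGen hgf⟩

theorem U1.exists_mem_inE_ge_of_eReach [Std.Refl le] (hU1 : U1 s t le) (h : eReach s t f b) :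
    ∃ g ∈ inE t (s b), le f g :=
  let ⟨g, hfg, hgb⟩ := Relation.TransGen.tail'_iff.1 h
  ⟨g, hgb, hU1.le_of_reflTransGen hfg⟩

theorem no_edge_between_max_inE_min_outE [IsPartialOrder E le] (hU1 : U1 s t le)
    (hP2 : P2 s t le) (ha : a ∈ inE t v) (hamax : ∀ x ∈ inE t v, le x a) (hb : b ∈ outE s v)
    (hbmin : ∀ x ∈ outE s v, le b x) (haf : ltOf le a f) (hfb : ltOf le f b) : False := by
  rcases hP2 a f b haf hfb (.single (ha.trans hb.symm)) with hreach | hreach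
  · obtain ⟨g, hg, hgf⟩ := hU1.exists_mem_outE_le_of_eReach hreach
    rw [ha] at hg
    exact not_le_of_ltOf hfb (trans_of le (hbmin g hg) hgf)
  · obtain ⟨g, hg, hfg⟩ := hU1.exists_mem_inE_ge_of_eReach hreach
    rw [hb] at hg
    exact not_le_of_ltOf haf (trans_of le hfg (hamax g hg))

theorem exists_max_inE_covBy_min_outE [Finite E] [IsLinearOrder E le] (hU1 : U1 s t le)
    (hP2 : P2 s t le) (hsrc : ¬ IsSource t v) (hsnk : ¬ IsSink s v) :
    ∃ a ∈ inE t v, ∃ b ∈ outE s v,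
      (∀ x ∈ inE t v, le x a) ∧ (∀ x ∈ outE s v, le b x) ∧
      ltOf le a b ∧ ∀ f, ltOf le a f → ltOf le f b → False := by
  obtain ⟨a, ha, hamax⟩ :=
    exists_forall_ge_of_finite (le := le) (Set.nonempty_iff_ne_empty.2 hsrc)
  obtain ⟨b, hb, hbmin⟩ :=
    exists_forall_le_of_finite (le := le) (Set.nonempty_iff_ne_empty.2 hsnk)
  exact ⟨a, ha, b, hb, hamax, hbmin, hU1.ltOf_of_mem_inE_of_mem_outE ha hb,
    fun _ => no_edge_between_max_inE_min_outE hU1 hP2 ha hamax hb hbmin⟩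

end Planar

theorem pop_satisfies_U2_general {V E : Type} [Fintype E]
    (s t : E → V) (le : E → E → Prop) (hPOP : IsPOP s t le) :
    (∀ v, ¬ IsSource t v → ¬ IsSink s v →
      ∃ a ∈ inE t v, ∃ b ∈ outE s v,
        (∀ x ∈ inE t v, le x a) ∧ (∀ x ∈ outE s v, le b x) ∧
        ltOf le a b ∧ ∀ f, ltOf le a f → ltOf le f b → False) ∧
    U2 s t le := by
  obtain ⟨-, hlin, hU1, hP2⟩ := hPOP
  have gap := fun v => exists_max_inE_covBy_min_outE (v := v) hU1 hP2
  refine ⟨gap, fun v => ?_⟩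
  by_cases hsrc : IsSource t v
  · rw [show inE t v = ∅ from hsrc]
    simp [hull_empty]
  by_cases hsnk : IsSink s v
  · rw [show outE s v = ∅ from hsnk]
    simp [hull_empty]
  obtain ⟨a, ha, b, hb, hamax, hbmin, hab, hgap⟩ := gap v hsrc hsnk
  exact ⟨hull_inter_hull_eq_empty hamax hbmin hab,
    hull_union_eq_union_hull ha hamax hb hbmin hab hgap⟩

/-- every planar order on a progressive graph satisfies (U2): for any
progressive vertex `v`, `O(v)⁻` is the immediate successor of `I(v)⁺`, and hence
`Ī(v) ∩ Ō(v) = ∅` and `Ē(v) = Ī(v) ∪ Ō(v)` for every vertex. -/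
theorem pop_satisfies_U2 {V E : Type} [Fintype V] [Fintype E]
    (s t : E → V) (le : E → E → Prop) (hPOP : IsPOP s t le) :
    (∀ v, ¬ IsSource t v → ¬ IsSink s v →
      ∃ a ∈ inE t v, ∃ b ∈ outE s v,
        (∀ x ∈ inE t v, le x a) ∧ (∀ x ∈ outE s v, le b x) ∧
        ltOf le a b ∧ ∀ f, ltOf le a f → ltOf le f b → False) ∧
    U2 s t le :=
  pop_satisfies_U2_general s t le hPOP
end

section
/- Let G be a progressive graph with a linear order ≺ on E(G) satisfying conditions (P1), (U2) and (P3). Then (G, ≺) satisfies condition (U3); consequently, for a progressive graph with (P1), conditions ((U2) and (P3)) imply that (G, ≺) is an anchored UPO-graph. -/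
variable {V E : Type}

/-- Generic key lemma: with a P3-style hypothesis and no two-cycles in `R`,
meeting hulls give inclusion of hulls. -/
lemma hull_subset_of_meet {V E : Type} (le : E → E → Prop) (hlin : IsLinearOrder E le)
    (I : V → Set E) (R : V → V → Prop)
    (hP : ∀ w1 w2, w1 ≠ w2 → (I w1 ∩ hull le (I w2)).Nonempty → R w1 w2)
    (hacyc : ∀ w1 w2, R w1 w2 → R w2 w1 → False)
    (v1 v2 : V) (hne : (I v1 ∩ hull le (I v2)).Nonempty) :
    hull le (I v1) ⊆ hull le (I v2) := by
  haveI := hlin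
  by_cases h12 : v1 = v2
  · subst h12; exact fun y hy => hy
  have hR : R v1 v2 := hP _ _ h12 hne
  obtain ⟨e, heI, p, hp, q, hq, hpe, heq⟩ := hne
  rintro y ⟨a, ha, b, hb, hay, hyb⟩
  refine ⟨p, hp, q, hq, ?_, ?_⟩
  · by_contra hpy
    have hyp : le y p := (total_of le p y).resolve_left hpy
    have hpH : p ∈ hull le (I v1) :=
      ⟨a, ha, e, heI, Trans.trans hay hyp, hpe⟩
    exact hacyc _ _ hR (hP v2 v1 (Ne.symm h12) ⟨p, hp, hpH⟩)
  · by_contra hyq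
    have hqy : le q y := (total_of le y q).resolve_left hyq
    have hqH : q ∈ hull le (I v1) :=
      ⟨e, heI, b, hb, heq, Trans.trans hqy hyb⟩
    exact hacyc _ _ hR (hP v2 v1 (Ne.symm h12) ⟨q, hq, hqH⟩)

/-- for a progressive graph with (P1), (U2) and (P3), condition (U3)
holds; consequently `(G, ≺)` is an anchored UPO-graph (it also satisfies (A)). -/
theorem U2_P3_implies_U3_anchored {V E : Type} [Fintype V] [Fintype E]
    (s t : E → V) (le : E → E → Prop) (hlin : IsLinearOrder E le)
    (hprog : Progressive s t) (hP1 : U1 s t le) (hU2 : U2 s t le)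
    (hP3 : P3 s t le) :
    U3 s t le ∧ CondA s t le := by
  haveI := hlin
  have hacyc : ∀ w1 w2 : V, vReach s t w1 w2 → vReach s t w2 w1 → False := by
    intro w1 w2 h1 h2
    exact hprog.1 w1 (Relation.TransGen.trans h1 h2)
  have hIn : ∀ v1 v2 : V, (inE t v1 ∩ hull le (inE t v2)).Nonempty →
      hull le (inE t v1) ⊆ hull le (inE t v2) := by
    intro v1 v2 hne
    exact hull_subset_of_meet le hlin (inE t) (vReach s t)
      (fun w1 w2 h hn => (hP3 w1 w2 h).1 hn) hacyc v1 v2 hne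
  have hOut : ∀ v1 v2 : V, (outE s v1 ∩ hull le (outE s v2)).Nonempty →
      hull le (outE s v1) ⊆ hull le (outE s v2) := by
    intro v1 v2 hne
    exact hull_subset_of_meet le hlin (outE s) (fun w1 w2 => vReach s t w2 w1)
      (fun w1 w2 h hn => (hP3 w1 w2 h).2 hn) (fun w1 w2 h1 h2 => hacyc _ _ h1 h2)
      v1 v2 hne
  refine ⟨fun v1 v2 => ⟨hIn v1 v2, hOut v1 v2⟩, fun v1 v2 h12 => ⟨?_, ?_⟩⟩
  · rintro ⟨y, a, ha, b, hb, hay, hyb⟩ hsub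
    have haH : a ∈ hull le (inE t v1) := ⟨a, ha, a, ha, refl_of le a, refl_of le a⟩
    exact (hP3 v1 v2 h12).1 ⟨a, ha, hsub haH⟩
  · rintro ⟨y, a, ha, b, hb, hay, hyb⟩ hsub
    have haH : a ∈ hull le (outE s v1) := ⟨a, ha, a, ha, refl_of le a, refl_of le a⟩
    exact (hP3 v1 v2 h12).2 ⟨a, ha, hsub haH⟩
end

section
/- Let G be an acyclic directed graph with source set S(G) = {v_1, …, v_m} and sink set T(G) = {w_1, …, w_n}, and let φ : G → (Γ, ≺) be a CPP-extension of G. Then the sets I(φ0(v)) for v ∈ S(G) and O(φ0(w)) for w ∈ T(G) are pairwise disjoint, their union equals E(Γ) \ φ1(E(G)), and |I(φ0(v))| = 1 for every v ∈ S(G) and |O(φ0(w))| = 1 for every w ∈ T(G). -/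
variable {V E : Type}

/-- for a CPP-extension `φ : G → (Γ, ≺)`, the sets `I(φ0 v)` for sources
`v` of `G` and `O(φ0 w)` for sinks `w` of `G` are pairwise disjoint, their union is
`E(Γ) \ φ1(E(G))`, and each is a singleton. -/
theorem cpp_new_edges {V E V' E' : Type} [Fintype V] [Fintype E] [Fintype V'] [Fintype E']
    (s t : E → V) (s' t' : E' → V') (le' : E' → E' → Prop)
    (φ0 : V → V') (φ1 : E → E') (hac : Acyclic s t)
    (hCPP : IsCPP s t s' t' le' φ0 φ1) :
    (∀ v1 v2, IsSource t v1 → IsSource t v2 → v1 ≠ v2 →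
      inE t' (φ0 v1) ∩ inE t' (φ0 v2) = ∅) ∧
    (∀ w1 w2, IsSink s w1 → IsSink s w2 → w1 ≠ w2 →
      outE s' (φ0 w1) ∩ outE s' (φ0 w2) = ∅) ∧
    (∀ v w, IsSource t v → IsSink s w →
      inE t' (φ0 v) ∩ outE s' (φ0 w) = ∅) ∧
    ((⋃ v ∈ {v : V | IsSource t v}, inE t' (φ0 v)) ∪
      (⋃ w ∈ {w : V | IsSink s w}, outE s' (φ0 w)) = Set.univ \ Set.range φ1) ∧
    (∀ v, IsSource t v → (inE t' (φ0 v)).ncard = 1) ∧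
    (∀ w, IsSink s w → (outE s' (φ0 w)).ncard = 1) := by
  classical
  obtain ⟨h0inj, h1inj, hs, ht, hPOP, hE1, hE2, hE3, hE4⟩ := hCPP
  -- images of φ0 are neither sources nor sinks of Γ
  have hns : ∀ v : V, ¬ IsSource t' (φ0 v) ∧ ¬ IsSink s' (φ0 v) := by
    intro v
    have hmem : φ0 v ∈ Set.range φ0 := ⟨v, rfl⟩
    rw [hE1] at hmem
    exact hmem
  -- pairwise disjointness
  have g1 : ∀ v1 v2 : V, v1 ≠ v2 → inE t' (φ0 v1) ∩ inE t' (φ0 v2) = ∅ := by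
    intro v1 v2 hne
    ext e
    simp only [Set.mem_inter_iff, inE, Set.mem_setOf_eq, Set.mem_empty_iff_false, iff_false]
    rintro ⟨h1, h2⟩
    exact hne (h0inj (h1.symm.trans h2))
  have g2 : ∀ w1 w2 : V, w1 ≠ w2 → outE s' (φ0 w1) ∩ outE s' (φ0 w2) = ∅ := by
    intro w1 w2 hne
    ext e
    simp only [Set.mem_inter_iff, outE, Set.mem_setOf_eq, Set.mem_empty_iff_false, iff_false]
    rintro ⟨h1, h2⟩
    exact hne (h0inj (h1.symm.trans h2))
  -- nonemptiness
  have hIne : ∀ v : V, (inE t' (φ0 v)).Nonempty := by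
    intro v
    by_contra h
    exact (hns v).1 (Set.not_nonempty_iff_eq_empty.mp h)
  have hOne : ∀ v : V, (outE s' (φ0 v)).Nonempty := by
    intro v
    by_contra h
    exact (hns v).2 (Set.not_nonempty_iff_eq_empty.mp h)
  -- disjointness from the range of φ1
  have hIr : ∀ v : V, IsSource t v → ∀ e : E, φ1 e ∉ inE t' (φ0 v) := by
    intro v hv e he
    have h1 : t' (φ1 e) = φ0 (t e) := ht e
    have h2 : t e = v := h0inj (h1.symm.trans he)
    have h3 : e ∈ inE t v := h2
    have hv' : inE t v = ∅ := hv
    rw [hv'] at h3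
    exact h3
  have hOr : ∀ w : V, IsSink s w → ∀ e : E, φ1 e ∉ outE s' (φ0 w) := by
    intro w hw e he
    have h1 : s' (φ1 e) = φ0 (s e) := hs e
    have h2 : s e = w := h0inj (h1.symm.trans he)
    have h3 : e ∈ outE s w := h2
    have hw' : outE s w = ∅ := hw
    rw [hw'] at h3
    exact h3
  set Sv : Set V := {v : V | IsSource t v} with hSv
  set Tv : Set V := {w : V | IsSink s w} with hTv
  -- the family of new-edge sets
  let F : (↥Sv ⊕ ↥Tv) → Set E' := fun i =>
    Sum.rec (fun v => inE t' (φ0 v.1)) (fun w => outE s' (φ0 w.1)) i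
  have hFne : ∀ i, (F i).Nonempty := by
    rintro (v | w)
    · exact hIne v.1
    · exact hOne w.1
  have hFdisj : ∀ i j, i ≠ j → F i ∩ F j = ∅ := by
    rintro (v1 | w1) (v2 | w2) hne
    · exact g1 v1.1 v2.1 (fun h => hne (by simp [Subtype.ext h]))
    · exact hE3 v1.1 w2.1 v1.2 w2.2
    · rw [Set.inter_comm]; exact hE3 v2.1 w1.1 v2.2 w1.2
    · exact g2 w1.1 w2.1 (fun h => hne (by simp [Subtype.ext h]))
  have hFsub : ∀ i, F i ⊆ (Set.range φ1)ᶜ := by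
    rintro (v | w) x hx ⟨e, rfl⟩
    · exact hIr v.1 v.2 e hx
    · exact hOr w.1 w.2 e hx
  -- the choice function
  let pick : (↥Sv ⊕ ↥Tv) → E' := fun i => (hFne i).some
  have hpick : ∀ i, pick i ∈ F i := fun i => (hFne i).some_mem
  have hpickinj : Function.Injective pick := by
    intro i j hij
    by_contra hne
    have : pick i ∈ F i ∩ F j := ⟨hpick i, hij ▸ hpick j⟩
    rw [hFdisj i j hne] at this
    exact this
  -- cardinalities
  have hcard1 : Nat.card (↥Sv ⊕ ↥Tv) = Sv.ncard + Tv.ncard := by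
    rw [Nat.card_sum, Nat.card_coe_set_eq, Nat.card_coe_set_eq]
  have hcomp : ((Set.range φ1)ᶜ : Set E').ncard = Sv.ncard + Tv.ncard := by
    have h1 : (Set.range φ1).ncard + (Set.range φ1)ᶜ.ncard = Nat.card E' :=
      Set.ncard_add_ncard_compl _
    have h2 : (Set.range φ1).ncard = Nat.card E := by
      rw [← Nat.card_coe_set_eq, Nat.card_range_of_injective h1inj]
    omega
  have hpr : (Set.range pick).ncard = Sv.ncard + Tv.ncard := by
    rw [← Nat.card_coe_set_eq, Nat.card_range_of_injective hpickinj, hcard1]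
  have hsub : Set.range pick ⊆ (Set.range φ1)ᶜ := by
    rintro _ ⟨i, rfl⟩
    exact hFsub i (hpick i)
  have heq : Set.range pick = (Set.range φ1)ᶜ :=
    Set.eq_of_subset_of_ncard_le hsub (by rw [hpr, hcomp])
  -- singleton conclusions
  have hsingI : ∀ v (hv : v ∈ Sv), inE t' (φ0 v) = {pick (Sum.inl ⟨v, hv⟩)} := by
    intro v hv
    apply Set.eq_singleton_iff_unique_mem.mpr
    refine ⟨hpick (Sum.inl ⟨v, hv⟩), fun x hx => ?_⟩
    have hxc : x ∈ (Set.range φ1)ᶜ := by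
      rintro ⟨e, rfl⟩; exact hIr v hv e hx
    rw [← heq] at hxc
    obtain ⟨i, rfl⟩ := hxc
    rcases i with v' | w'
    · have hx' : t' (pick (Sum.inl v')) = φ0 v'.1 := hpick (Sum.inl v')
      have hx2 : t' (pick (Sum.inl v')) = φ0 v := hx
      have : v'.1 = v := h0inj (hx'.symm.trans hx2)
      exact congrArg (fun u => pick (Sum.inl u)) (Subtype.ext this)
    · have hmem : pick (Sum.inr w') ∈ inE t' (φ0 v) ∩ outE s' (φ0 w'.1) :=
        ⟨hx, hpick (Sum.inr w')⟩
      rw [hE3 v w'.1 hv w'.2] at hmem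
      exact absurd hmem (Set.notMem_empty _)
  have hsingO : ∀ w (hw : w ∈ Tv), outE s' (φ0 w) = {pick (Sum.inr ⟨w, hw⟩)} := by
    intro w hw
    apply Set.eq_singleton_iff_unique_mem.mpr
    refine ⟨hpick (Sum.inr ⟨w, hw⟩), fun x hx => ?_⟩
    have hxc : x ∈ (Set.range φ1)ᶜ := by
      rintro ⟨e, rfl⟩; exact hOr w hw e hx
    rw [← heq] at hxc
    obtain ⟨i, rfl⟩ := hxc
    rcases i with v' | w'
    · have hmem : pick (Sum.inl v') ∈ inE t' (φ0 v'.1) ∩ outE s' (φ0 w) :=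
        ⟨hpick (Sum.inl v'), hx⟩
      rw [hE3 v'.1 w v'.2 hw] at hmem
      exact absurd hmem (Set.notMem_empty _)
    · have hx' : s' (pick (Sum.inr w')) = φ0 w'.1 := hpick (Sum.inr w')
      have hx2 : s' (pick (Sum.inr w')) = φ0 w := hx
      have : w'.1 = w := h0inj (hx'.symm.trans hx2)
      exact congrArg (fun u => pick (Sum.inr u)) (Subtype.ext this)
  -- the union statement
  have hunion : (⋃ v ∈ Sv, inE t' (φ0 v)) ∪ (⋃ w ∈ Tv, outE s' (φ0 w)) =
      Set.univ \ Set.range φ1 := by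
    rw [Set.diff_eq, Set.univ_inter, ← heq]
    apply Set.Subset.antisymm
    · rintro x (hx | hx)
      · obtain ⟨v, hv, hx⟩ := Set.mem_iUnion₂.mp hx
        have := hsingI v hv
        rw [this] at hx
        exact ⟨Sum.inl ⟨v, hv⟩, hx.symm⟩
      · obtain ⟨w, hw, hx⟩ := Set.mem_iUnion₂.mp hx
        have := hsingO w hw
        rw [this] at hx
        exact ⟨Sum.inr ⟨w, hw⟩, hx.symm⟩
    · rintro _ ⟨i, rfl⟩
      rcases i with v | w
      · exact Or.inl (Set.mem_iUnion₂.mpr ⟨v.1, v.2, hpick (Sum.inl v)⟩)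
      · exact Or.inr (Set.mem_iUnion₂.mpr ⟨w.1, w.2, hpick (Sum.inr w)⟩)
  refine ⟨fun v1 v2 _ _ h => g1 v1 v2 h, fun w1 w2 _ _ h => g2 w1 w2 h, hE3, hunion,
    fun v hv => ?_, fun w hw => ?_⟩
  · rw [hsingI v hv, Set.ncard_singleton]
  · rw [hsingO w hw, Set.ncard_singleton]
end
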